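/- Let π : G × X → X be an action of a topological group G on a uniform space X such that π is π-uniform and every orbit map π_x : G → X, g ↦ g·x, is continuous. Then π : G × X → X is (jointly) continuous. -/

import Mathlib

/-!
To see that `g • x` is close to `g₀ • x₀`, pass through `g • x₀`: continuity of the orbit map of
`x₀` makes `g • x₀` close to `g₀ • x₀`, and π-uniformity at `g₀` makes `g • x` close to `g • x₀`
for `x` near `x₀`, uniformly in `g` near `g₀`.
-/

open Filter Topology Uniformity

/-- An action `act` of a group `G` equipped with a topology `σ` on a set `X` equipped with a
uniformity (filter) `𝔅` is *π-uniform* if for every `g₀ ∈ G` and every entourage `ε ∈ 𝔅`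
there exist an entourage `δ ∈ 𝔅` and a neighborhood `U` of `g₀` such that
`(g • x, g • y) ∈ ε` whenever `(x, y) ∈ δ` and `g ∈ U`. -/
def IsPiUniform {G X : Type*} (σ : TopologicalSpace G) (𝔅 : Filter (X × X))
    (act : G → X → X) : Prop :=
  ∀ g₀ : G, ∀ ε ∈ 𝔅, ∃ δ ∈ 𝔅, ∃ U ∈ @nhds G σ g₀,
    ∀ g ∈ U, ∀ x y : X, (x, y) ∈ δ → (act g x, act g y) ∈ ε

theorem continuousAt_uncurry_of_eventually_equicontinuousAt {G X Y : Type*}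
    [TopologicalSpace G] [TopologicalSpace X] [UniformSpace Y] {F : G → X → Y} {g₀ : G} {x₀ : X}
    (hcont : ContinuousAt (F · x₀) g₀)
    (hequi : ∀ ε ∈ 𝓤 Y, ∀ᶠ p : G × X in 𝓝 (g₀, x₀), (F p.1 x₀, F p.1 p.2) ∈ ε) :
    ContinuousAt (Function.uncurry F) (g₀, x₀) := by
  rw [ContinuousAt, Uniform.tendsto_nhds_right]
  intro ε hε
  obtain ⟨ε', hε', hcomp⟩ := comp_mem_uniformity_sets hε
  have hfst : ContinuousAt (fun p : G × X => F p.1 x₀) (g₀, x₀) :=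
    hcont.comp_of_eq continuousAt_fst rfl
  have horbit : ∀ᶠ p : G × X in 𝓝 (g₀, x₀), (F g₀ x₀, F p.1 x₀) ∈ ε' :=
    Uniform.tendsto_nhds_right.1 hfst hε'
  show ∀ᶠ p : G × X in 𝓝 (g₀, x₀), (F g₀ x₀, F p.1 p.2) ∈ ε
  filter_upwards [horbit, hequi ε' hε'] with p h₁ h₂
  exact hcomp (SetRel.prodMk_mem_comp h₁ h₂)

theorem IsPiUniform.eventually_nhds_prod_mem {G X : Type*} [TopologicalSpace G] [UniformSpace X]
    {act : G → X → X} (h : IsPiUniform ‹_› (𝓤 X) act) (g₀ : G) (x₀ : X) :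
    ∀ ε ∈ 𝓤 X, ∀ᶠ p : G × X in 𝓝 (g₀, x₀), (act p.1 x₀, act p.1 p.2) ∈ ε := by
  intro ε hε
  obtain ⟨δ, hδ, U, hU, hUδ⟩ := h g₀ ε hε
  filter_upwards [prod_mem_nhds hU (UniformSpace.ball_mem_nhds x₀ hδ)] with ⟨g, x⟩ ⟨hg, hx⟩
  exact hUδ g hg x₀ x hx

theorem continuous_smul_of_piUniform {G X : Type*}
    [Group G] [TopologicalSpace G] [UniformSpace X] [MulAction G X]
    (hπ : IsPiUniform (inferInstance : TopologicalSpace G) (uniformity X)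
      (fun (g : G) (x : X) => g • x))
    (horb : ∀ x : X, Continuous fun g : G => g • x) :
    Continuous fun p : G × X => p.1 • p.2 :=
  continuous_iff_continuousAt.2 fun ⟨g₀, x₀⟩ =>
    continuousAt_uncurry_of_eventually_equicontinuousAt (horb x₀).continuousAt
      (hπ.eventually_nhds_prod_mem g₀ x₀)
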